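/- arXiv:1412.5845 — 4 statements merged into one kernel-verified Lean document; each statement's English description precedes it below -/
import Mathlib

section
/- For every n and every measurable function f : ℝ^d → ℝ, one has ∫ ρ_n(x) |f(x)|² dx ≤ exp( 2 |ΔZ_n| ‖h‖_∞ + (Δt_n/2) ‖h‖_∞² ) ∫ ρ_{n−1}(x) |f(x)|² dx. In particular, if f is square-integrable with respect to ρ_{n−1} then it is square-integrable with respect to ρ_n, and if ρ_0 has finite second moment then so does every ρ_n. -/
open MeasureTheory Real

/-!
The weight `w = exp (h ΔZ - Δt/2 h²)` of one step satisfies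
`exp (-(|ΔZ| C + Δt/2 C²)) ≤ w ≤ exp (|ΔZ| C)`. Since the previous density is a probability
density, the normaliser `∫ ρ w` is at least the lower bound, hence
`ρ w / ∫ ρ w ≤ exp (2 |ΔZ| C + Δt/2 C²) ρ` pointwise. As the ratio of consecutive densities is
bounded above and away from zero, `ρ |f|²` is integrable for one density exactly when it is for
the next, so the integral inequality also holds when both sides are the junk value `0`.
-/

/-- Bayes recursion with weights `exp(H_n)`, `H_n(x) = h(x) ΔZ_n - (Δt_n/2) h(x)²`.
The `n`-th step uses the increments `ΔZ n`, `Δt n` (0-indexed), so `bayesH … n`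
plays the role of `ρ_n`. -/
noncomputable def bayesH {d : ℕ} (h ρ₀ : EuclideanSpace ℝ (Fin d) → ℝ) (ΔZ Δt : ℕ → ℝ) :
    ℕ → EuclideanSpace ℝ (Fin d) → ℝ
  | 0 => ρ₀
  | n + 1 => fun x =>
      bayesH h ρ₀ ΔZ Δt n x * Real.exp (h x * ΔZ n - Δt n / 2 * h x ^ 2) /
        ∫ y, bayesH h ρ₀ ΔZ Δt n y * Real.exp (h y * ΔZ n - Δt n / 2 * h y ^ 2)

section BayesUpdate

variable {α : Type*} [MeasurableSpace α] {μ : Measure α} {ρ w φ : α → ℝ} {m M : ℝ}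

noncomputable def bayesUpdate (μ : Measure α) (ρ w : α → ℝ) : α → ℝ :=
  fun x => ρ x * w x / ∫ y, ρ y * w y ∂μ

structure IsProbDensity (μ : Measure α) (ρ : α → ℝ) : Prop where
  nonneg : ∀ x, 0 ≤ ρ x
  integrable : Integrable ρ μ
  integral_eq_one : ∫ x, ρ x ∂μ = 1

lemma integrable_mul_iff_of_bounds {f v : α → ℝ} (hv : AEStronglyMeasurable v μ) (hm : 0 < m)
    (hvm : ∀ x, m ≤ v x) (hvM : ∀ x, v x ≤ M) :
    Integrable (fun x => f x * v x) μ ↔ Integrable f μ := by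
  have hvpos : ∀ x, 0 < v x := fun x => hm.trans_le (hvm x)
  refine ⟨fun hfv => ?_, fun hf => hf.mul_bdd (c := M) hv (ae_of_all μ fun x => ?_)⟩
  · have hinv : Integrable (fun x => f x * v x * (v x)⁻¹) μ := by
      refine hfv.mul_bdd (c := m⁻¹) hv.aemeasurable.inv.aestronglyMeasurable
        (ae_of_all μ fun x => ?_)
      rw [norm_inv, Real.norm_of_nonneg (hvpos x).le]
      exact inv_anti₀ hm (hvm x)
    simpa only [mul_inv_cancel_right₀ (hvpos _).ne'] using hinv
  · rw [Real.norm_of_nonneg (hvpos x).le]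
    exact hvM x

lemma IsProbDensity.le_integral_mul (hρ : IsProbDensity μ ρ) (hw : AEStronglyMeasurable w μ)
    (hm : 0 < m) (hwm : ∀ x, m ≤ w x) (hwM : ∀ x, w x ≤ M) :
    m ≤ ∫ x, ρ x * w x ∂μ :=
  calc m = ∫ x, ρ x * m ∂μ := by rw [integral_mul_const, hρ.integral_eq_one, one_mul]
    _ ≤ ∫ x, ρ x * w x ∂μ :=
      integral_mono (hρ.integrable.mul_const m)
        ((integrable_mul_iff_of_bounds hw hm hwm hwM).2 hρ.integrable)
        fun x => mul_le_mul_of_nonneg_left (hwm x) (hρ.nonneg x)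

lemma integrable_bayesUpdate_mul_iff (hρ : IsProbDensity μ ρ) (hw : AEStronglyMeasurable w μ)
    (hm : 0 < m) (hwm : ∀ x, m ≤ w x) (hwM : ∀ x, w x ≤ M) :
    Integrable (fun x => bayesUpdate μ ρ w x * φ x) μ ↔ Integrable (fun x => ρ x * φ x) μ := by
  set Z := ∫ x, ρ x * w x ∂μ
  have hZ : 0 < Z := hm.trans_le (hρ.le_integral_mul hw hm hwm hwM)
  have hupdate : (fun x => bayesUpdate μ ρ w x * φ x) = fun x => ρ x * φ x * (w x / Z) := by
    funext x
    simp only [bayesUpdate]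
    ring
  rw [hupdate]
  exact integrable_mul_iff_of_bounds (hw.aemeasurable.div_const Z).aestronglyMeasurable (div_pos hm hZ)
    (fun x => div_le_div_of_nonneg_right (hwm x) hZ.le)
    (fun x => div_le_div_of_nonneg_right (hwM x) hZ.le)

lemma IsProbDensity.bayesUpdate (hρ : IsProbDensity μ ρ) (hw : AEStronglyMeasurable w μ)
    (hm : 0 < m) (hwm : ∀ x, m ≤ w x) (hwM : ∀ x, w x ≤ M) :
    IsProbDensity μ (bayesUpdate μ ρ w) where
  nonneg x := div_nonneg (mul_nonneg (hρ.nonneg x) (hm.le.trans (hwm x)))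
    (hm.le.trans (hρ.le_integral_mul hw hm hwm hwM))
  integrable := by
    simpa only [mul_one] using
      (integrable_bayesUpdate_mul_iff (φ := fun _ => 1) hρ hw hm hwm hwM).2
        (by simpa only [mul_one] using hρ.integrable)
  integral_eq_one := by
    simp only [_root_.bayesUpdate]
    rw [integral_div]
    exact div_self (hm.trans_le (hρ.le_integral_mul hw hm hwm hwM)).ne'

lemma bayesUpdate_le (hρ : IsProbDensity μ ρ) (hw : AEStronglyMeasurable w μ)
    (hm : 0 < m) (hwm : ∀ x, m ≤ w x) (hwM : ∀ x, w x ≤ M) (x : α) :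
    bayesUpdate μ ρ w x ≤ M / m * ρ x := by
  have hZ := hρ.le_integral_mul hw hm hwm hwM
  have hwρ : ρ x * w x ≤ ρ x * M := mul_le_mul_of_nonneg_left (hwM x) (hρ.nonneg x)
  calc ρ x * w x / ∫ y, ρ y * w y ∂μ ≤ ρ x * M / m :=
        div_le_div₀ ((mul_nonneg (hρ.nonneg x) (hm.le.trans (hwm x))).trans hwρ) hwρ hm hZ
    _ = M / m * ρ x := by ring

lemma integral_bayesUpdate_mul_le (hρ : IsProbDensity μ ρ) (hw : AEStronglyMeasurable w μ)
    (hm : 0 < m) (hwm : ∀ x, m ≤ w x) (hwM : ∀ x, w x ≤ M) (hφ : ∀ x, 0 ≤ φ x) :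
    ∫ x, bayesUpdate μ ρ w x * φ x ∂μ ≤ M / m * ∫ x, ρ x * φ x ∂μ := by
  have hiff := integrable_bayesUpdate_mul_iff (φ := φ) hρ hw hm hwm hwM
  by_cases hint : Integrable (fun x => ρ x * φ x) μ
  · rw [← integral_const_mul]
    refine integral_mono (hiff.2 hint) (hint.const_mul _) fun x => ?_
    calc bayesUpdate μ ρ w x * φ x ≤ M / m * ρ x * φ x :=
          mul_le_mul_of_nonneg_right (bayesUpdate_le hρ hw hm hwm hwM x) (hφ x)
      _ = M / m * (ρ x * φ x) := mul_assoc _ _ _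
  · rw [integral_undef hint, integral_undef (mt hiff.1 hint), mul_zero]

end BayesUpdate

lemma mul_sub_sq_le {u z t C : ℝ} (hu : |u| ≤ C) (ht : 0 ≤ t) :
    u * z - t / 2 * u ^ 2 ≤ |z| * C := by
  have : u * z ≤ |z| * C :=
    calc u * z ≤ |u| * |z| := by rw [← abs_mul]; exact le_abs_self _
      _ ≤ |z| * C := by rw [mul_comm]; exact mul_le_mul_of_nonneg_left hu (abs_nonneg z)
  nlinarith [sq_nonneg u]

lemma neg_le_mul_sub_sq {u z t C : ℝ} (hu : |u| ≤ C) (ht : 0 ≤ t) :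
    -(|z| * C + t / 2 * C ^ 2) ≤ u * z - t / 2 * u ^ 2 := by
  have hz : -(|z| * C) ≤ u * z :=
    calc -(|z| * C) ≤ -(|u| * |z|) := by
          rw [mul_comm]; exact neg_le_neg (mul_le_mul_of_nonneg_right hu (abs_nonneg z))
      _ ≤ u * z := by rw [← abs_mul]; exact neg_abs_le _
  have hsq : u ^ 2 ≤ C ^ 2 := sq_le_sq' (abs_le.1 hu).1 (abs_le.1 hu).2
  nlinarith

theorem bayes_L2_transfer_general
    {d : ℕ} (h ρ₀ : EuclideanSpace ℝ (Fin d) → ℝ) (ΔZ Δt : ℕ → ℝ)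
    (hΔt : ∀ n, 0 < Δt n)
    (hhm : Measurable h) (C : ℝ) (hhb : ∀ x, |h x| ≤ C)
    (hρnn : ∀ x, 0 ≤ ρ₀ x)
    (hρint : Integrable ρ₀) (hρ1 : ∫ x, ρ₀ x = 1) :
    (∀ n : ℕ, ∀ f : EuclideanSpace ℝ (Fin d) → ℝ, Measurable f →
      ∫ x, bayesH h ρ₀ ΔZ Δt (n + 1) x * |f x| ^ 2 ≤
        Real.exp (2 * |ΔZ n| * C + Δt n / 2 * C ^ 2) *
          ∫ x, bayesH h ρ₀ ΔZ Δt n x * |f x| ^ 2) ∧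
    (∀ n : ℕ, ∀ f : EuclideanSpace ℝ (Fin d) → ℝ, Measurable f →
      Integrable (fun x => bayesH h ρ₀ ΔZ Δt n x * |f x| ^ 2) →
      Integrable (fun x => bayesH h ρ₀ ΔZ Δt (n + 1) x * |f x| ^ 2)) ∧
    (Integrable (fun x => ρ₀ x * ‖x‖ ^ 2) →
      ∀ n : ℕ, Integrable (fun x => bayesH h ρ₀ ΔZ Δt n x * ‖x‖ ^ 2)) := by
  set w : ℕ → EuclideanSpace ℝ (Fin d) → ℝ := fun n x => exp (h x * ΔZ n - Δt n / 2 * h x ^ 2)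
  have hw n : AEStronglyMeasurable (w n) := by fun_prop
  have hwm n x : exp (-(|ΔZ n| * C + Δt n / 2 * C ^ 2)) ≤ w n x :=
    exp_le_exp.2 (neg_le_mul_sub_sq (hhb x) (hΔt n).le)
  have hwM n x : w n x ≤ exp (|ΔZ n| * C) := exp_le_exp.2 (mul_sub_sq_le (hhb x) (hΔt n).le)
  have hratio n : exp (|ΔZ n| * C) / exp (-(|ΔZ n| * C + Δt n / 2 * C ^ 2)) =
      exp (2 * |ΔZ n| * C + Δt n / 2 * C ^ 2) := by
    rw [← exp_sub]; ring_nf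
  have hdens n : IsProbDensity volume (bayesH h ρ₀ ΔZ Δt n) := by
    induction n with
    | zero => exact ⟨hρnn, hρint, hρ1⟩
    | succ n ih => exact ih.bayesUpdate (hw n) (exp_pos _) (hwm n) (hwM n)
  have transfer n (f : EuclideanSpace ℝ (Fin d) → ℝ) :
      Integrable (fun x => bayesH h ρ₀ ΔZ Δt n x * |f x| ^ 2) →
        Integrable (fun x => bayesH h ρ₀ ΔZ Δt (n + 1) x * |f x| ^ 2) :=
    (integrable_bayesUpdate_mul_iff (hdens n) (hw n) (exp_pos _) (hwm n) (hwM n)).2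
  refine ⟨fun n f _ => ?_, fun n f _ => transfer n f, fun h2 n => ?_⟩
  · rw [← hratio]
    exact integral_bayesUpdate_mul_le (hdens n) (hw n) (exp_pos _) (hwm n) (hwM n)
      fun x => sq_nonneg _
  · induction n with
    | zero => exact h2
    | succ n ih => simpa only [abs_norm] using transfer n (‖·‖) (by simpa only [abs_norm] using ih)

/-- **Transfer of second moments along the Bayes recursion.**  For every `n` and every
measurable `f`,
`∫ ρ_{n+1} |f|² ≤ exp(2 |ΔZ_{n+1}| ‖h‖_∞ + (Δt_{n+1}/2) ‖h‖_∞²) ∫ ρ_n |f|²`;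
in particular square-integrability w.r.t. `ρ_n` implies square-integrability w.r.t.
`ρ_{n+1}`, and a finite second moment of `ρ_0` propagates to every `ρ_n`. -/
theorem bayes_L2_transfer
    {d : ℕ} (h ρ₀ : EuclideanSpace ℝ (Fin d) → ℝ) (ΔZ Δt : ℕ → ℝ)
    (hΔt : ∀ n, 0 < Δt n)
    (hhm : Measurable h) (C : ℝ) (hhb : ∀ x, |h x| ≤ C)
    (hρm : Measurable ρ₀) (hρnn : ∀ x, 0 ≤ ρ₀ x)
    (hρint : Integrable ρ₀) (hρ1 : ∫ x, ρ₀ x = 1) :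
    (∀ n : ℕ, ∀ f : EuclideanSpace ℝ (Fin d) → ℝ, Measurable f →
      ∫ x, bayesH h ρ₀ ΔZ Δt (n + 1) x * |f x| ^ 2 ≤
        Real.exp (2 * |ΔZ n| * C + Δt n / 2 * C ^ 2) *
          ∫ x, bayesH h ρ₀ ΔZ Δt n x * |f x| ^ 2) ∧
    (∀ n : ℕ, ∀ f : EuclideanSpace ℝ (Fin d) → ℝ, Measurable f →
      Integrable (fun x => bayesH h ρ₀ ΔZ Δt n x * |f x| ^ 2) →
      Integrable (fun x => bayesH h ρ₀ ΔZ Δt (n + 1) x * |f x| ^ 2)) ∧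
    (Integrable (fun x => ρ₀ x * ‖x‖ ^ 2) →
      ∀ n : ℕ, Integrable (fun x => bayesH h ρ₀ ΔZ Δt n x * ‖x‖ ^ 2)) :=
  bayes_L2_transfer_general h ρ₀ ΔZ Δt hΔt hhm C hhb hρnn hρint hρ1
end

section
/- Suppose ρ_0 satisfies PI(λ_0) for some λ_0 > 0, and suppose there are constants M, T > 0 with |ΔZ_1 + … + ΔZ_n| ≤ M and Δt_1 + … + Δt_n ≤ T for all n ≤ N. Then every density ρ_n produced by the Bayes recursion satisfies PI(λ̄) with the uniform constant λ̄ = λ_0 exp( −( 2 M ‖h‖_∞ + T ‖h‖_∞² ) ). -/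
/-!
After `n` steps the Bayes recursion is a single exponential tilt of `ρ₀` by
`exp (h S - t h² / 2)`, with `S = ∑_{k<n} ΔZ_k` and `t = ∑_{k<n} Δt_k`. For `n ≤ N` the exponent
lies in `[-K, K]` with `K = M ‖h‖_∞ + T ‖h‖_∞² / 2`, so `e^{-K} ρ₀ / Z ≤ ρ_n ≤ e^{K} ρ₀ / Z`.
This is the Holley–Stroock situation: for `f` centred under `ρ_n` and `m` its `ρ₀`-mean,
`∫ f² ρ_n ≤ ∫ (f - m)² ρ_n ≤ (e^{K}/Z) ∫ (f - m)² ρ₀`, the Poincaré inequality of `ρ₀` bounds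
this by the Dirichlet energy under `ρ₀`, and that energy is at most `Z e^{K}` times the one
under `ρ_n`; the constant degrades by the factor `e^{-2K}`.
-/

open MeasureTheory Real

/-- A probability density `ρ` on `ℝ^d` satisfies the Poincaré inequality `PI(λ)`:
for every `C¹` function `f` with `f ∈ L²(ρ)`, `∇f ∈ L²(ρ)` and `∫ f ρ = 0`,
`∫ f² ρ ≤ (1/λ) ∫ |∇f|² ρ`. -/
def PoincareIneq {d : ℕ} (ρ : EuclideanSpace ℝ (Fin d) → ℝ) (lam : ℝ) : Prop :=
  ∀ f : EuclideanSpace ℝ (Fin d) → ℝ, ContDiff ℝ 1 f →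
    Integrable (fun x => f x ^ 2 * ρ x) →
    Integrable (fun x => ‖gradient f x‖ ^ 2 * ρ x) →
    (∫ x, f x * ρ x) = 0 →
    ∫ x, f x ^ 2 * ρ x ≤ (1 / lam) * ∫ x, ‖gradient f x‖ ^ 2 * ρ x

lemma sub_const_sq_mul_eq {α : Type*} (g w : α → ℝ) (c : ℝ) :
    (fun x => (g x - c) ^ 2 * w x)
      = fun x => g x ^ 2 * w x - 2 * c * (g x * w x) + c ^ 2 * w x := by
  ext x; ring

section WeightedIntegrals

variable {α : Type*} [MeasurableSpace α] {μ : Measure α} {g w w' : α → ℝ} {c : ℝ}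

lemma integrable_mul_of_le_const_mul (hgw' : Integrable (fun x => g x * w' x) μ)
    (hm : AEStronglyMeasurable (fun x => g x * w x) μ) (hg : ∀ x, 0 ≤ g x) (hw : ∀ x, 0 ≤ w x)
    (hle : ∀ x, w x ≤ c * w' x) : Integrable (fun x => g x * w x) μ := by
  refine (hgw'.const_mul c).mono' hm (ae_of_all _ fun x => ?_)
  rw [norm_of_nonneg (mul_nonneg (hg x) (hw x)), mul_left_comm]
  exact mul_le_mul_of_nonneg_left (hle x) (hg x)

lemma integral_mul_le_const_mul_integral (hgw : Integrable (fun x => g x * w x) μ)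
    (hgw' : Integrable (fun x => g x * w' x) μ) (hg : ∀ x, 0 ≤ g x)
    (hle : ∀ x, w x ≤ c * w' x) : ∫ x, g x * w x ∂μ ≤ c * ∫ x, g x * w' x ∂μ := by
  rw [← integral_const_mul]
  refine integral_mono hgw (hgw'.const_mul c) fun x => ?_
  rw [mul_left_comm]
  exact mul_le_mul_of_nonneg_left (hle x) (hg x)

lemma integrable_mul_of_integrable_sq_mul (hw : Integrable w μ)
    (hg2 : Integrable (fun x => g x ^ 2 * w x) μ)
    (hm : AEStronglyMeasurable (fun x => g x * w x) μ) (hw0 : ∀ x, 0 ≤ w x) :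
    Integrable (fun x => g x * w x) μ := by
  refine ((hg2.add hw).div_const 2).mono' hm (ae_of_all _ fun x => ?_)
  rw [norm_mul, norm_of_nonneg (hw0 x), Real.norm_eq_abs]
  have : |g x| ≤ (g x ^ 2 + 1) / 2 := by nlinarith [sq_nonneg (|g x| - 1), sq_abs (g x)]
  show |g x| * w x ≤ (g x ^ 2 * w x + w x) / 2
  nlinarith [hw0 x]

lemma integrable_sub_const_sq_mul (hw : Integrable w μ)
    (hg2 : Integrable (fun x => g x ^ 2 * w x) μ)
    (hgw : Integrable (fun x => g x * w x) μ) (c : ℝ) :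
    Integrable (fun x => (g x - c) ^ 2 * w x) μ := by
  rw [sub_const_sq_mul_eq]
  exact (hg2.sub (hgw.const_mul _)).add (hw.const_mul _)

lemma integral_sub_const_sq_mul (hw : Integrable w μ)
    (hg2 : Integrable (fun x => g x ^ 2 * w x) μ)
    (hgw : Integrable (fun x => g x * w x) μ) (c : ℝ) :
    ∫ x, (g x - c) ^ 2 * w x ∂μ
      = ∫ x, g x ^ 2 * w x ∂μ - 2 * c * ∫ x, g x * w x ∂μ + c ^ 2 * ∫ x, w x ∂μ := by
  have hlin : Integrable (fun x => g x ^ 2 * w x - 2 * c * (g x * w x)) μ :=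
    hg2.sub (hgw.const_mul _)
  rw [sub_const_sq_mul_eq, integral_add hlin (hw.const_mul _),
    integral_sub hg2 (hgw.const_mul _), integral_const_mul, integral_const_mul]

end WeightedIntegrals

lemma gradient_sub_const {E : Type*} [NormedAddCommGroup E] [InnerProductSpace ℝ E]
    [CompleteSpace E] (f : E → ℝ) (c : ℝ) : gradient (fun x => f x - c) = gradient f := by
  ext1 x
  simp only [gradient, fderiv_sub_const]

theorem PoincareIneq.of_const_mul_le_of_le_const_mul {d : ℕ}
    {ρ ρ' : EuclideanSpace ℝ (Fin d) → ℝ} {lam c₁ c₂ : ℝ}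
    (hPI : PoincareIneq ρ lam) (hlam : 0 < lam) (hρm : Measurable ρ) (hρnn : ∀ x, 0 ≤ ρ x)
    (hρint : Integrable ρ) (hρ1 : ∫ x, ρ x = 1) (hρ'm : Measurable ρ') (hc₁ : 0 < c₁)
    (hlow : ∀ x, c₁ * ρ x ≤ ρ' x) (hup : ∀ x, ρ' x ≤ c₂ * ρ x) :
    PoincareIneq ρ' (lam * (c₁ / c₂)) := by
  intro f hf hf2 hgrad hmean
  have hc₂ : 0 ≤ c₂ := by
    have := integral_mono (hρint.const_mul c₁) (hρint.const_mul c₂)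
      fun x => (hlow x).trans (hup x)
    simp only [integral_const_mul, hρ1, mul_one] at this
    linarith
  have hρ'nn : ∀ x, 0 ≤ ρ' x := fun x => (mul_nonneg hc₁.le (hρnn x)).trans (hlow x)
  have hρ_le : ∀ x, ρ x ≤ c₁⁻¹ * ρ' x := fun x => by
    rw [inv_mul_eq_div, le_div_iff₀ hc₁, mul_comm]; exact hlow x
  have hfm : Measurable f := hf.continuous.measurable
  have hgradm : Measurable fun x => ‖gradient f x‖ ^ 2 :=
    ((InnerProductSpace.toDual ℝ _).symm.continuous.comp
      (hf.continuous_fderiv one_ne_zero)).measurable.norm.pow_const 2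
  have hρ'int : Integrable ρ' :=
    (hρint.const_mul c₂).mono' hρ'm.aestronglyMeasurable
      (ae_of_all _ fun x => (norm_of_nonneg (hρ'nn x)).trans_le (hup x))
  have hf2ρ : Integrable (fun x => f x ^ 2 * ρ x) :=
    integrable_mul_of_le_const_mul hf2 ((hfm.pow_const 2).mul hρm).aestronglyMeasurable
      (fun x => sq_nonneg _) hρnn hρ_le
  have hgradρ : Integrable (fun x => ‖gradient f x‖ ^ 2 * ρ x) :=
    integrable_mul_of_le_const_mul hgrad (hgradm.mul hρm).aestronglyMeasurable
      (fun x => sq_nonneg _) hρnn hρ_le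
  have hfρ : Integrable (fun x => f x * ρ x) :=
    integrable_mul_of_integrable_sq_mul hρint hf2ρ (hfm.mul hρm).aestronglyMeasurable hρnn
  have hfρ' : Integrable (fun x => f x * ρ' x) :=
    integrable_mul_of_integrable_sq_mul hρ'int hf2 (hfm.mul hρ'm).aestronglyMeasurable hρ'nn
  set m := ∫ x, f x * ρ x
  have hcentered : ∫ x, (f x - m) * ρ x = 0 := by
    simp only [sub_mul]
    rw [integral_sub hfρ (hρint.const_mul m), integral_const_mul, hρ1, mul_one, sub_self]
  have hPIm := hPI (fun x => f x - m) (hf.sub contDiff_const)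
    (integrable_sub_const_sq_mul hρint hf2ρ hfρ m) (by rwa [gradient_sub_const]) hcentered
  rw [gradient_sub_const] at hPIm
  calc ∫ x, f x ^ 2 * ρ' x
      ≤ ∫ x, (f x - m) ^ 2 * ρ' x := by
        rw [integral_sub_const_sq_mul hρ'int hf2 hfρ' m, hmean]
        have : 0 ≤ ∫ x, ρ' x := integral_nonneg hρ'nn
        nlinarith [sq_nonneg m]
    _ ≤ c₂ * ∫ x, (f x - m) ^ 2 * ρ x :=
        integral_mul_le_const_mul_integral (integrable_sub_const_sq_mul hρ'int hf2 hfρ' m)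
          (integrable_sub_const_sq_mul hρint hf2ρ hfρ m) (fun x => sq_nonneg _) hup
    _ ≤ c₂ * ((1 / lam) * ∫ x, ‖gradient f x‖ ^ 2 * ρ x) := by gcongr
    _ ≤ c₂ * ((1 / lam) * (c₁⁻¹ * ∫ x, ‖gradient f x‖ ^ 2 * ρ' x)) := by
        gcongr
        exact integral_mul_le_const_mul_integral hgradρ hgrad (fun x => sq_nonneg _) hρ_le
    _ = 1 / (lam * (c₁ / c₂)) * ∫ x, ‖gradient f x‖ ^ 2 * ρ' x := by
        field_simp

noncomputable def expTilt {α : Type*} [MeasureSpace α] (ρ G : α → ℝ) : α → ℝ :=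
  fun x => ρ x * Real.exp (G x) / ∫ y, ρ y * Real.exp (G y)

section ExpTilt

variable {α : Type*} [MeasureSpace α] {ρ G : α → ℝ} {K : ℝ}

lemma expTilt_zero (hρ1 : ∫ x, ρ x = 1) : expTilt ρ 0 = ρ := by
  ext x
  simp [expTilt, hρ1]

lemma expTilt_expTilt (G₂ : α → ℝ) (hZ : ∫ x, ρ x * Real.exp (G x) ≠ 0) :
    expTilt (expTilt ρ G) G₂ = expTilt ρ (G + G₂) := by
  have hnum : ∀ x, expTilt ρ G x * Real.exp (G₂ x)
      = ρ x * Real.exp ((G + G₂) x) / ∫ y, ρ y * Real.exp (G y) := fun x => by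
    rw [expTilt, Pi.add_apply, Real.exp_add]; ring
  ext x
  rw [expTilt, hnum, funext hnum, integral_div, expTilt, div_div_div_cancel_right₀ hZ]

lemma integrable_mul_exp (hρint : Integrable ρ) (hGm : Measurable G) (hGK : ∀ x, |G x| ≤ K) :
    Integrable fun x => ρ x * Real.exp (G x) :=
  hρint.mul_bdd hGm.exp.aestronglyMeasurable <| ae_of_all _ fun x => by
    rw [Real.norm_of_nonneg (Real.exp_pos _).le]
    exact Real.exp_le_exp.2 (abs_le.1 (hGK x)).2

lemma integral_mul_exp_pos (hρnn : ∀ x, 0 ≤ ρ x) (hρint : Integrable ρ) (hρpos : 0 < ∫ x, ρ x)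
    (hGm : Measurable G) (hGK : ∀ x, |G x| ≤ K) : 0 < ∫ x, ρ x * Real.exp (G x) := by
  have hlow : ∫ x, ρ x * Real.exp (-K) ≤ ∫ x, ρ x * Real.exp (G x) :=
    integral_mono (hρint.mul_const _) (integrable_mul_exp hρint hGm hGK) fun x =>
      mul_le_mul_of_nonneg_left (Real.exp_le_exp.2 (abs_le.1 (hGK x)).1) (hρnn x)
  rw [integral_mul_const] at hlow
  exact (mul_pos hρpos (Real.exp_pos _)).trans_le hlow

end ExpTilt

theorem PoincareIneq.expTilt {d : ℕ} {ρ G : EuclideanSpace ℝ (Fin d) → ℝ} {lam K : ℝ}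
    (hPI : PoincareIneq ρ lam) (hlam : 0 < lam) (hρm : Measurable ρ) (hρnn : ∀ x, 0 ≤ ρ x)
    (hρint : Integrable ρ) (hρ1 : ∫ x, ρ x = 1) (hGm : Measurable G) (hGK : ∀ x, |G x| ≤ K) :
    PoincareIneq (expTilt ρ G) (lam * Real.exp (-(2 * K))) := by
  set Z := ∫ x, ρ x * Real.exp (G x)
  have hZ : 0 < Z := integral_mul_exp_pos hρnn hρint (hρ1 ▸ one_pos) hGm hGK
  have hconst : Real.exp (-K) / Z / (Real.exp K / Z) = Real.exp (-(2 * K)) := by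
    rw [div_div_div_cancel_right₀ hZ.ne', ← Real.exp_sub]; ring_nf
  rw [← hconst]
  refine hPI.of_const_mul_le_of_le_const_mul hlam hρm hρnn hρint hρ1
    ((hρm.mul hGm.exp).div_const Z) (div_pos (Real.exp_pos _) hZ) (fun x => ?_) (fun x => ?_)
  · rw [_root_.expTilt, div_mul_eq_mul_div, mul_comm]
    gcongr
    exacts [hρnn x, (abs_le.1 (hGK x)).1]
  · rw [_root_.expTilt, div_mul_eq_mul_div, mul_comm (Real.exp K)]
    gcongr
    exacts [hρnn x, (abs_le.1 (hGK x)).2]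

lemma abs_mul_sub_half_mul_sq_le {a C S t : ℝ} (ha : |a| ≤ C) (ht : 0 ≤ t) :
    |a * S - t / 2 * a ^ 2| ≤ C * |S| + t / 2 * C ^ 2 := by
  have hsq : a ^ 2 ≤ C ^ 2 := sq_le_sq' (abs_le.1 ha).1 (abs_le.1 ha).2
  calc |a * S - t / 2 * a ^ 2| ≤ |a| * |S| + t / 2 * a ^ 2 := by
        have : |t / 2 * a ^ 2| = t / 2 * a ^ 2 := abs_of_nonneg (by positivity)
        exact (abs_sub _ _).trans_eq (by rw [abs_mul, this])
    _ ≤ C * |S| + t / 2 * C ^ 2 := by gcongr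

lemma bayesH_eq_expTilt {d : ℕ} {h ρ₀ : EuclideanSpace ℝ (Fin d) → ℝ} {ΔZ Δt : ℕ → ℝ} {C : ℝ}
    (hΔt : ∀ n, 0 ≤ Δt n) (hhm : Measurable h) (hhb : ∀ x, |h x| ≤ C)
    (hρ₀nn : ∀ x, 0 ≤ ρ₀ x) (hρ₀int : Integrable ρ₀) (hρ₀1 : ∫ x, ρ₀ x = 1) (n : ℕ) :
    bayesH h ρ₀ ΔZ Δt n = expTilt ρ₀ fun x =>
      h x * ∑ k ∈ Finset.range n, ΔZ k - (∑ k ∈ Finset.range n, Δt k) / 2 * h x ^ 2 := by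
  induction n with
  | zero => exact (expTilt_zero hρ₀1).symm.trans (by simp [Pi.zero_def])
  | succ n ih =>
    have ht : 0 ≤ ∑ k ∈ Finset.range n, Δt k := Finset.sum_nonneg fun k _ => hΔt k
    have hZ := integral_mul_exp_pos hρ₀nn hρ₀int (hρ₀1 ▸ one_pos) (by fun_prop)
      fun x => abs_mul_sub_half_mul_sq_le (S := ∑ k ∈ Finset.range n, ΔZ k) (hhb x) ht
    change expTilt (bayesH h ρ₀ ΔZ Δt n) (fun x => h x * ΔZ n - Δt n / 2 * h x ^ 2) = _
    rw [ih, expTilt_expTilt _ hZ.ne']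
    congr 1
    ext x
    simp only [Pi.add_apply, Finset.sum_range_succ]
    ring

theorem bayes_uniform_poincare_general
    {d : ℕ} (h ρ₀ : EuclideanSpace ℝ (Fin d) → ℝ) (ΔZ Δt : ℕ → ℝ) (N : ℕ)
    (hΔt : ∀ n, 0 < Δt n)
    (hhm : Measurable h) (C : ℝ) (hhb : ∀ x, |h x| ≤ C)
    (hρ₀m : Measurable ρ₀) (hρ₀nn : ∀ x, 0 ≤ ρ₀ x)
    (hρ₀int : Integrable ρ₀) (hρ₀1 : ∫ x, ρ₀ x = 1)
    (lam₀ : ℝ) (hlam₀ : 0 < lam₀) (hPI₀ : PoincareIneq ρ₀ lam₀)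
    (M T : ℝ)
    (hZb : ∀ n ≤ N, |∑ k ∈ Finset.range n, ΔZ k| ≤ M)
    (htb : ∀ n ≤ N, ∑ k ∈ Finset.range n, Δt k ≤ T) :
    ∀ n ≤ N, PoincareIneq (bayesH h ρ₀ ΔZ Δt n)
      (lam₀ * Real.exp (-(2 * M * C + T * C ^ 2))) := by
  intro n hn
  have hC : 0 ≤ C := (abs_nonneg _).trans (hhb 0)
  have ht : 0 ≤ ∑ k ∈ Finset.range n, Δt k := Finset.sum_nonneg fun k _ => (hΔt k).le
  have hbound : ∀ x,
      |h x * ∑ k ∈ Finset.range n, ΔZ k - (∑ k ∈ Finset.range n, Δt k) / 2 * h x ^ 2|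
        ≤ C * M + T / 2 * C ^ 2 := fun x => by
    refine (abs_mul_sub_half_mul_sq_le (hhb x) ht).trans ?_
    gcongr
    exacts [hZb n hn, htb n hn]
  rw [bayesH_eq_expTilt (fun k => (hΔt k).le) hhm hhb hρ₀nn hρ₀int hρ₀1]
  convert hPI₀.expTilt hlam₀ hρ₀m hρ₀nn hρ₀int hρ₀1 (by fun_prop) hbound using 4
  ring

/-- **Uniform Poincaré inequality along the Bayes recursion.**  If `ρ_0` satisfies
`PI(λ_0)`, `|Z_n - Z_0| = |∑_{k<n} ΔZ_k| ≤ M` and `t_n = ∑_{k<n} Δt_k ≤ T` for all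
`n ≤ N`, then every `ρ_n`, `n ≤ N`, satisfies `PI(λ̄)` with the uniform constant
`λ̄ = λ_0 exp(-(2 M ‖h‖_∞ + T ‖h‖_∞²))`. -/
theorem bayes_uniform_poincare
    {d : ℕ} (h ρ₀ : EuclideanSpace ℝ (Fin d) → ℝ) (ΔZ Δt : ℕ → ℝ) (N : ℕ)
    (hΔt : ∀ n, 0 < Δt n)
    (hhm : Measurable h) (C : ℝ) (hhb : ∀ x, |h x| ≤ C)
    (hρ₀m : Measurable ρ₀) (hρ₀nn : ∀ x, 0 ≤ ρ₀ x)
    (hρ₀int : Integrable ρ₀) (hρ₀1 : ∫ x, ρ₀ x = 1)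
    (lam₀ : ℝ) (hlam₀ : 0 < lam₀) (hPI₀ : PoincareIneq ρ₀ lam₀)
    (M T : ℝ) (hM : 0 < M) (hT : 0 < T)
    (hZb : ∀ n ≤ N, |∑ k ∈ Finset.range n, ΔZ k| ≤ M)
    (htb : ∀ n ≤ N, ∑ k ∈ Finset.range n, Δt k ≤ T) :
    ∀ n ≤ N, PoincareIneq (bayesH h ρ₀ ΔZ Δt n)
      (lam₀ * Real.exp (-(2 * M * C + T * C ^ 2))) :=
  bayes_uniform_poincare_general h ρ₀ ΔZ Δt N hΔt hhm C hhb hρ₀m hρ₀nn hρ₀int hρ₀1 lam₀ hlam₀ hPI₀ M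
    T hZb htb
end

section
/- (Differentiated Poisson identity.) Let ρ(x) = e^{−G(x)} > 0 on ℝ^d with G twice continuously differentiable, let g be continuously differentiable, let c ∈ ℝ, and let φ be three times continuously differentiable satisfying the pointwise equation −∇·(ρ ∇φ)(x) = (g(x) − c) ρ(x) for all x ∈ ℝ^d. Define the vector field G⃗ = D²(log ρ) ∇φ + ∇g, i.e., G⃗_k = Σ_j (∂² log ρ / ∂x_k ∂x_j) (∂φ/∂x_j) + ∂g/∂x_k. Then for each k ∈ {1,…,d} the pointwise identity −∇·( ρ ∇(∂φ/∂x_k) )(x) = G⃗_k(x) ρ(x) holds for all x ∈ ℝ^d. -/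
/-!
Write `ρ = exp L` with `L = log ρ = -G`, differentiate the equation in a direction `v`, and
commute `∂_v` with the divergence (Schwarz). Since `∂_v ρ = ρ ∂_v L`, the field `∂_v (ρ ∇φ)` is
`ρ ∇(∂_v φ) + ∂_v L • ρ ∇φ`, and the divergence of the second summand is
`∂_v L · ∇·(ρ ∇φ) + ρ ⟪∇(∂_v L), ∇φ⟫`. By the equation, its first term cancels the term
`(g - c) ρ ∂_v L` of `∂_v ((g - c) ρ)`, which leaves `-∇·(ρ ∇(∂_v φ)) = (⟪∇(∂_v L), ∇φ⟫ + ∂_v g) ρ`.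
-/

open MeasureTheory Real

/-- Divergence `∇·V = ∑_j ∂V_j/∂x_j` of a vector field on `ℝ^d`. -/
noncomputable def diverg {d : ℕ}
    (V : EuclideanSpace ℝ (Fin d) → EuclideanSpace ℝ (Fin d))
    (x : EuclideanSpace ℝ (Fin d)) : ℝ :=
  ∑ j, fderiv ℝ (fun y => V y j) x (EuclideanSpace.single j 1)

open InnerProductSpace

section Calculus

variable {E F : Type*} [NormedAddCommGroup E] [NormedSpace ℝ E]

theorem fderiv_fderiv_apply_comm [NormedAddCommGroup F] [NormedSpace ℝ F] {f : E → F} {x : E}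
    (hf : ContDiffAt ℝ 2 f x) (v w : E) :
    fderiv ℝ (fun y => fderiv ℝ f y v) x w = fderiv ℝ (fun y => fderiv ℝ f y w) x v := by
  have hdf : DifferentiableAt ℝ (fderiv ℝ f) x :=
    (hf.fderiv_right (m := 1) le_rfl).differentiableAt one_ne_zero
  rw [fderiv_clm_apply hdf (differentiableAt_const v),
    fderiv_clm_apply hdf (differentiableAt_const w)]
  simpa using hf.isSymmSndFDerivAt (by simp) w v

variable [NormedAddCommGroup F] [InnerProductSpace ℝ F] [CompleteSpace F]

theorem ContDiff.gradient {f : F → ℝ} {m n : WithTop ℕ∞} (hf : ContDiff ℝ n f)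
    (hmn : m + 1 ≤ n) : ContDiff ℝ m (gradient f) :=
  (toDual ℝ F).symm.contDiff.comp (hf.fderiv_right hmn)

theorem fderiv_gradient_apply {f : F → ℝ} {x : F} (hf : ContDiffAt ℝ 2 f x) (v : F) :
    fderiv ℝ (gradient f) x v = gradient (fun y => fderiv ℝ f y v) x := by
  have hdf : HasFDerivAt (fderiv ℝ f) (fderiv ℝ (fderiv ℝ f) x) x :=
    ((hf.fderiv_right (m := 1) le_rfl).differentiableAt one_ne_zero).hasFDerivAt
  have hgrad : HasFDerivAt (gradient f)
      ((toDual ℝ F).symm.toContinuousLinearEquiv.toContinuousLinearMap.comp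
        (fderiv ℝ (fderiv ℝ f) x)) x :=
    (toDual ℝ F).symm.toContinuousLinearEquiv.hasFDerivAt.comp x hdf
  rw [hgrad.fderiv, gradient]
  show (toDual ℝ F).symm _ = (toDual ℝ F).symm _
  congr 1
  ext w
  rw [fderiv_clm_apply hdf.differentiableAt (differentiableAt_const v)]
  simpa using hf.isSymmSndFDerivAt (by simp) v w

theorem fderiv_exp_smul_gradient_apply {L φ : F → ℝ} {y : F} (hL : DifferentiableAt ℝ L y)
    (hφ : ContDiffAt ℝ 2 φ y) (v : F) :
    fderiv ℝ (fun z => exp (L z) • gradient φ z) y v =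
      exp (L y) • gradient (fun z => fderiv ℝ φ z v) y
        + fderiv ℝ L y v • (exp (L y) • gradient φ y) := by
  have hgrad : DifferentiableAt ℝ (gradient φ) y :=
    (toDual ℝ F).symm.differentiableAt.comp y
      ((hφ.fderiv_right (m := 1) le_rfl).differentiableAt one_ne_zero)
  rw [fderiv_fun_smul hL.exp hgrad, add_apply, smul_apply, ContinuousLinearMap.smulRight_apply,
    fderiv_gradient_apply hφ, fderiv_exp hL, smul_apply, smul_eq_mul, smul_smul, mul_comm]

end Calculus

section Coordinates

variable {ι H : Type*} [Fintype ι] [NormedAddCommGroup H] [NormedSpace ℝ H]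

theorem gradient_apply_eq_fderiv_single [DecidableEq ι] (f : EuclideanSpace ℝ ι → ℝ)
    (x : EuclideanSpace ℝ ι) (i : ι) :
    gradient f x i = fderiv ℝ f x (EuclideanSpace.single i 1) := by
  simp [← inner_gradient_left, EuclideanSpace.inner_single_right]

theorem fderiv_euclidean_apply {F : H → EuclideanSpace ℝ ι} {x : H}
    (hF : DifferentiableAt ℝ F x) (v : H) (i : ι) :
    fderiv ℝ F x v i = fderiv ℝ (fun y => F y i) x v := by
  rw [show (fun y => F y i) = EuclideanSpace.proj i ∘ F from rfl,
    fderiv_comp x (ContinuousLinearMap.differentiableAt _) hF, ContinuousLinearMap.fderiv]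
  rfl

theorem ContinuousLinearMap.apply_eq_sum_single [DecidableEq ι]
    (L : EuclideanSpace ℝ ι →L[ℝ] ℝ) (v : EuclideanSpace ℝ ι) :
    L v = ∑ i, v i * L (EuclideanSpace.single i 1) := by
  conv_lhs => rw [← (EuclideanSpace.basisFun ι ℝ).sum_repr v]
  simp

end Coordinates

section Divergence

variable {d : ℕ} {V W : EuclideanSpace ℝ (Fin d) → EuclideanSpace ℝ (Fin d)}
  {x : EuclideanSpace ℝ (Fin d)}

theorem diverg_add (hV : DifferentiableAt ℝ V x) (hW : DifferentiableAt ℝ W x) :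
    diverg (fun y => V y + W y) x = diverg V x + diverg W x := by
  rw [differentiableAt_piLp] at hV hW
  simp only [diverg, PiLp.add_apply, ← Finset.sum_add_distrib]
  refine Finset.sum_congr rfl fun j _ => ?_
  rw [fderiv_fun_add (hV j) (hW j), add_apply]

theorem diverg_smul {a : EuclideanSpace ℝ (Fin d) → ℝ} (ha : DifferentiableAt ℝ a x)
    (hV : DifferentiableAt ℝ V x) :
    diverg (fun y => a y • V y) x = a x * diverg V x + fderiv ℝ a x (V x) := by
  rw [differentiableAt_piLp] at hV
  simp only [diverg, PiLp.smul_apply, smul_eq_mul, Finset.mul_sum,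
    (fderiv ℝ a x).apply_eq_sum_single (V x), ← Finset.sum_add_distrib]
  refine Finset.sum_congr rfl fun j _ => ?_
  rw [fderiv_fun_mul ha (hV j)]
  simp only [add_apply, smul_apply, smul_eq_mul]

theorem fderiv_diverg (hV : ContDiff ℝ 2 V) (x v : EuclideanSpace ℝ (Fin d)) :
    fderiv ℝ (diverg V) x v = diverg (fun y => fderiv ℝ V y v) x := by
  have hVj : ∀ j, ContDiff ℝ 2 (fun y => V y j) := (contDiff_piLp 2).1 hV
  have hdiff : ∀ j, Differentiable ℝ
      fun y => fderiv ℝ (fun z => V z j) y (EuclideanSpace.single j 1) := fun j =>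
    (((hVj j).fderiv_right (m := 1) le_rfl).clm_apply contDiff_const).differentiable one_ne_zero
  rw [show diverg V =
      fun y => ∑ j, fderiv ℝ (fun z => V z j) y (EuclideanSpace.single j 1) from rfl,
    fderiv_fun_sum fun j _ => (hdiff j) x, sum_apply]
  refine Finset.sum_congr rfl fun j _ => ?_
  rw [fderiv_fderiv_apply_comm (hVj j).contDiffAt]
  congr 2
  funext y
  exact (fderiv_euclidean_apply (hV.differentiable two_ne_zero y) v j).symm

end Divergence

theorem fderiv_diverg_exp_smul_gradient {d : ℕ} {L φ : EuclideanSpace ℝ (Fin d) → ℝ}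
    (hL : ContDiff ℝ 2 L) (hφ : ContDiff ℝ 3 φ) (x v : EuclideanSpace ℝ (Fin d)) :
    fderiv ℝ (diverg fun y => exp (L y) • gradient φ y) x v =
      diverg (fun y => exp (L y) • gradient (fun z => fderiv ℝ φ z v) y) x
        + fderiv ℝ L x v * diverg (fun y => exp (L y) • gradient φ y) x
        + exp (L x) * fderiv ℝ (fun y => fderiv ℝ L y v) x (gradient φ x) := by
  have hρ : ContDiff ℝ 2 fun y => exp (L y) := hL.exp
  have hV : ContDiff ℝ 2 fun y => exp (L y) • gradient φ y :=
    hρ.smul (hφ.gradient (by norm_num))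
  have hφv : ContDiff ℝ 2 fun z => fderiv ℝ φ z v :=
    (hφ.fderiv_right (m := 2) (by norm_num)).clm_apply contDiff_const
  have hLv : ContDiff ℝ 1 fun z => fderiv ℝ L z v :=
    (hL.fderiv_right (m := 1) (by norm_num)).clm_apply contDiff_const
  have hV_deriv := fun y => fderiv_exp_smul_gradient_apply (hL.differentiable two_ne_zero y)
    (hφ.of_le (by norm_num)).contDiffAt v
  rw [fderiv_diverg hV, funext hV_deriv,
    diverg_add ((hρ.differentiable two_ne_zero x).fun_smul
        ((hφv.gradient (m := 1) (by norm_num)).differentiable one_ne_zero x))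
      ((hLv.differentiable one_ne_zero x).fun_smul (hV.differentiable two_ne_zero x)),
    diverg_smul (hLv.differentiable one_ne_zero x) (hV.differentiable two_ne_zero x), map_smul,
    smul_eq_mul, add_assoc]

theorem neg_diverg_exp_smul_gradient_fderiv_of_poisson {d : ℕ}
    {L g φ : EuclideanSpace ℝ (Fin d) → ℝ} {c : ℝ}
    (hL : ContDiff ℝ 2 L) (hg : ContDiff ℝ 1 g) (hφ : ContDiff ℝ 3 φ)
    (hpde : ∀ x, -diverg (fun y => exp (L y) • gradient φ y) x = (g x - c) * exp (L x))
    (x v : EuclideanSpace ℝ (Fin d)) :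
    -diverg (fun y => exp (L y) • gradient (fun z => fderiv ℝ φ z v) y) x =
      (fderiv ℝ (fun y => fderiv ℝ L y v) x (gradient φ x) + fderiv ℝ g x v) * exp (L x) := by
  have hdiv : (diverg fun y => exp (L y) • gradient φ y) = fun y => -((g y - c) * exp (L y)) :=
    funext fun y => neg_eq_iff_eq_neg.mp (hpde y)
  have hpde_deriv := fderiv_diverg_exp_smul_gradient hL hφ x v
  rw [hdiv, fderiv_fun_neg, fderiv_fun_mul ((hg.differentiable one_ne_zero x).sub_const c)
    (hL.exp.differentiable two_ne_zero x), fderiv_sub_const,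
    fderiv_exp (hL.differentiable two_ne_zero x)] at hpde_deriv
  simp only [neg_apply, add_apply, smul_apply, smul_eq_mul] at hpde_deriv
  linear_combination hpde_deriv

/-- **Differentiated Poisson identity.**  Let `ρ = e^{-G} > 0` with `G ∈ C²`, let
`g ∈ C¹`, `c ∈ ℝ`, and let `φ ∈ C³` satisfy `-∇·(ρ∇φ) = (g - c)ρ` pointwise.  With
`G⃗ = D²(log ρ)∇φ + ∇g`, for each coordinate `k` one has the pointwise identity
`-∇·(ρ ∇(∂φ/∂x_k)) = G⃗_k ρ`. -/
theorem poisson_differentiated_identity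
    {d : ℕ} (G g φ : EuclideanSpace ℝ (Fin d) → ℝ) (c : ℝ)
    (hG : ContDiff ℝ 2 G) (hg : ContDiff ℝ 1 g) (hφ : ContDiff ℝ 3 φ)
    (ρ : EuclideanSpace ℝ (Fin d) → ℝ) (hρ : ρ = fun x => Real.exp (-G x))
    (hpde : ∀ x, -diverg (fun y => ρ y • gradient φ y) x = (g x - c) * ρ x)
    (Gvec : EuclideanSpace ℝ (Fin d) → EuclideanSpace ℝ (Fin d))
    (hGvec : Gvec = fun x =>
      fderiv ℝ (fun y => gradient (fun z => Real.log (ρ z)) y) x (gradient φ x)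
        + gradient g x) :
    ∀ k : Fin d, ∀ x,
      -diverg (fun y => ρ y • gradient (fun z => gradient φ z k) y) x =
        Gvec x k * ρ x := by
  intro k x
  subst hρ hGvec
  have hgrad : DifferentiableAt ℝ (gradient fun z => -G z) x :=
    (hG.neg.gradient (m := 1) (by norm_num)).differentiable one_ne_zero x
  simp only [log_exp, PiLp.add_apply, fderiv_euclidean_apply hgrad,
    gradient_apply_eq_fderiv_single]
  exact neg_diverg_exp_smul_gradient_fderiv_of_poisson hG.neg hg hφ hpde x _
end

section
/- (Integral transfer identity.) Assume h is bounded and continuously differentiable with bounded gradient. Fix n ≥ 1 and let g : ℝ^d → ℝ be measurable with g integrable with respect to both ρ_{n−1}(x)dx and ρ_n(x)dx. Let ς : ℝ^d → ℝ^d be a vector field, square-integrable with respect to ρ_{n−1}(x)dx, such that the weak-form identity ∫ ∇ψ(x) · ς(x) ρ_{n−1}(x) dx = ∫ g(x) ψ(x) ρ_{n−1}(x) dx − ( ∫ g ρ_{n−1} dx )( ∫ ψ ρ_{n−1} dx ) holds for the particular test function ψ = ρ_n/ρ_{n−1} (which is bounded and continuously differentiable with bounded gradient). Then ∫ ρ_n(x)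 g(x) dx = ∫ ρ_{n−1}(x) g(x) dx + ∫ ρ_n(x) ( ΔZ_n − h(x) Δt_n ) ∇h(x) · ς(x) dx. -/
/-!
The ratio `ψ = ρ_{n+1}/ρ_n` is `exp(H_n)/Z_n`, a function of `h` alone, so by the chain rule
`∇ψ = ψ (ΔZ_n - Δt_n h) ∇h`. Since `ψ ρ_n = ρ_{n+1}` and `∫ ψ ρ_n = 1`, the weak-form identity
for this `ψ` is exactly the transfer identity. The recursion is well defined because the
weight `exp(H_n)` is bounded by `exp(ΔZ_n² / (2 Δt_n))`, so every `ρ_n` stays integrable and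
positive.
-/

open MeasureTheory Real

theorem HasDerivAt.comp_hasGradientAt {F : Type*} [NormedAddCommGroup F] [InnerProductSpace ℝ F]
    [CompleteSpace F] {φ : ℝ → ℝ} {φ' : ℝ} {f : F → ℝ} {f' : F} {x : F}
    (hφ : HasDerivAt φ φ' (f x)) (hf : HasGradientAt f f' x) :
    HasGradientAt (φ ∘ f) (φ' • f') x := by
  rw [hasGradientAt_iff_hasFDerivAt, map_smul]
  exact hφ.comp_hasFDerivAt x (hasGradientAt_iff_hasFDerivAt.mp hf)

theorem integral_pos_of_forall_pos {α : Type*} [MeasurableSpace α] {μ : Measure α} [NeZero μ]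
    {f : α → ℝ} (hf : Integrable f μ) (hpos : ∀ x, 0 < f x) : 0 < ∫ x, f x ∂μ := by
  rw [integral_pos_iff_support_of_nonneg (fun x ↦ (hpos x).le) hf,
    Function.support_eq_univ fun x ↦ (hpos x).ne']
  exact Measure.measure_univ_pos.mpr (NeZero.ne μ)

/-- `exp (H_n)` as a function of `y = h x`, with `a = ΔZ_n` and `b = Δt_n`. -/
noncomputable def bayesWeight (a b y : ℝ) : ℝ := exp (y * a - b / 2 * y ^ 2)

section bayesWeight

variable {a b : ℝ}

theorem bayesWeight_pos (y : ℝ) : 0 < bayesWeight a b y := exp_pos _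

theorem bayesWeight_le (hb : 0 < b) (y : ℝ) : bayesWeight a b y ≤ exp (a ^ 2 / (2 * b)) := by
  refine exp_le_exp.mpr ?_
  rw [le_div_iff₀ (by positivity)]
  nlinarith [sq_nonneg (b * y - a)]

theorem continuous_bayesWeight : Continuous (bayesWeight a b) := by
  unfold bayesWeight; fun_prop

theorem hasDerivAt_bayesWeight (y : ℝ) :
    HasDerivAt (bayesWeight a b) (bayesWeight a b y * (a - b * y)) y := by
  have hexponent : HasDerivAt (fun y ↦ y * a - b / 2 * y ^ 2) (a - b * y) y := by
    refine (((hasDerivAt_id' y).mul_const a).sub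
      ((hasDerivAt_pow 2 y).const_mul (b / 2))).congr_deriv ?_
    norm_num
    ring
  exact hexponent.exp

theorem MeasureTheory.Integrable.mul_bayesWeight_comp {α : Type*} [MeasurableSpace α]
    {μ : Measure α} {ρ h : α → ℝ} (hρ : Integrable ρ μ) (hh : Measurable h) (hb : 0 < b) :
    Integrable (fun x ↦ ρ x * bayesWeight a b (h x)) μ := by
  refine hρ.mul_bdd (c := exp (a ^ 2 / (2 * b)))
    (continuous_bayesWeight.measurable.comp hh).aestronglyMeasurable (.of_forall fun x ↦ ?_)
  rw [norm_of_nonneg (bayesWeight_pos _).le]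
  exact bayesWeight_le hb _

theorem integral_mul_bayesWeight_comp_pos {α : Type*} [MeasurableSpace α] {μ : Measure α}
    [NeZero μ] {ρ h : α → ℝ} (hρ : Integrable ρ μ) (hρpos : ∀ x, 0 < ρ x) (hh : Measurable h)
    (hb : 0 < b) : 0 < ∫ x, ρ x * bayesWeight a b (h x) ∂μ :=
  integral_pos_of_forall_pos (hρ.mul_bayesWeight_comp hh hb) fun x ↦
    mul_pos (hρpos x) (bayesWeight_pos _)

end bayesWeight

section bayesH

variable {d : ℕ} {h ρ₀ : EuclideanSpace ℝ (Fin d) → ℝ} {ΔZ Δt : ℕ → ℝ}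

theorem bayesH_succ_apply (n : ℕ) (x : EuclideanSpace ℝ (Fin d)) :
    bayesH h ρ₀ ΔZ Δt (n + 1) x = bayesH h ρ₀ ΔZ Δt n x * bayesWeight (ΔZ n) (Δt n) (h x) /
      ∫ y, bayesH h ρ₀ ΔZ Δt n y * bayesWeight (ΔZ n) (Δt n) (h y) :=
  rfl

theorem integrable_bayesH_and_pos (hh : Measurable h) (hΔt : ∀ n, 0 < Δt n)
    (hρint : Integrable ρ₀) (hρpos : ∀ x, 0 < ρ₀ x) (n : ℕ) :
    Integrable (bayesH h ρ₀ ΔZ Δt n) ∧ ∀ x, 0 < bayesH h ρ₀ ΔZ Δt n x := by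
  induction n with
  | zero => exact ⟨hρint, hρpos⟩
  | succ n ih =>
    obtain ⟨hint, hpos⟩ := ih
    have hZ := integral_mul_bayesWeight_comp_pos (a := ΔZ n) hint hpos hh (hΔt n)
    exact ⟨(hint.mul_bayesWeight_comp hh (hΔt n)).div_const _,
      fun x ↦ div_pos (mul_pos (hpos x) (bayesWeight_pos _)) hZ⟩

theorem integral_bayesH_succ (hh : Measurable h) (hΔt : ∀ n, 0 < Δt n)
    (hρint : Integrable ρ₀) (hρpos : ∀ x, 0 < ρ₀ x) (n : ℕ) :
    ∫ x, bayesH h ρ₀ ΔZ Δt (n + 1) x = 1 := by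
  obtain ⟨hint, hpos⟩ := integrable_bayesH_and_pos (ΔZ := ΔZ) hh hΔt hρint hρpos n
  have hZ := integral_mul_bayesWeight_comp_pos (a := ΔZ n) hint hpos hh (hΔt n)
  simp only [bayesH_succ_apply, integral_div]
  exact div_self hZ.ne'

theorem bayesH_succ_div {n : ℕ} {x : EuclideanSpace ℝ (Fin d)}
    (hpos : bayesH h ρ₀ ΔZ Δt n x ≠ 0) :
    bayesH h ρ₀ ΔZ Δt (n + 1) x / bayesH h ρ₀ ΔZ Δt n x = bayesWeight (ΔZ n) (Δt n) (h x) /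
      ∫ y, bayesH h ρ₀ ΔZ Δt n y * bayesWeight (ΔZ n) (Δt n) (h y) := by
  rw [bayesH_succ_apply, mul_div_assoc, mul_div_cancel_left₀ _ hpos]

theorem gradient_bayesH_succ_div {n : ℕ} (hh : Differentiable ℝ h)
    (hpos : ∀ x, bayesH h ρ₀ ΔZ Δt n x ≠ 0) (x : EuclideanSpace ℝ (Fin d)) :
    gradient (fun x ↦ bayesH h ρ₀ ΔZ Δt (n + 1) x / bayesH h ρ₀ ΔZ Δt n x) x =
      (bayesH h ρ₀ ΔZ Δt (n + 1) x / bayesH h ρ₀ ΔZ Δt n x * (ΔZ n - Δt n * h x)) •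
        gradient h x := by
  simp only [bayesH_succ_div (hpos _)]
  have hφ := (hasDerivAt_bayesWeight (a := ΔZ n) (b := Δt n) (h x)).div_const
    (∫ y, bayesH h ρ₀ ΔZ Δt n y * bayesWeight (ΔZ n) (Δt n) (h y))
  rw [mul_div_right_comm] at hφ
  exact (hφ.comp_hasGradientAt (hh x).hasGradientAt).gradient

end bayesH

theorem bayes_integral_transfer_general
    {d : ℕ} (h ρ₀ : EuclideanSpace ℝ (Fin d) → ℝ) (ΔZ Δt : ℕ → ℝ)
    (hΔt : ∀ n, 0 < Δt n)
    (hh1 : ContDiff ℝ 1 h)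
    (hρpos : ∀ x, 0 < ρ₀ x)
    (hρint : Integrable ρ₀)
    (n : ℕ)
    (g : EuclideanSpace ℝ (Fin d) → ℝ)
    (ς : EuclideanSpace ℝ (Fin d) → EuclideanSpace ℝ (Fin d))
    (ψ : EuclideanSpace ℝ (Fin d) → ℝ)
    (hψ : ψ = fun x => bayesH h ρ₀ ΔZ Δt (n + 1) x / bayesH h ρ₀ ΔZ Δt n x)
    (hweak : ∫ x, (inner ℝ (gradient ψ x) (ς x) : ℝ) * bayesH h ρ₀ ΔZ Δt n x =
      (∫ x, g x * ψ x * bayesH h ρ₀ ΔZ Δt n x) -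
        (∫ x, g x * bayesH h ρ₀ ΔZ Δt n x) * ∫ x, ψ x * bayesH h ρ₀ ΔZ Δt n x) :
    ∫ x, bayesH h ρ₀ ΔZ Δt (n + 1) x * g x =
      (∫ x, bayesH h ρ₀ ΔZ Δt n x * g x) +
        ∫ x, bayesH h ρ₀ ΔZ Δt (n + 1) x * (ΔZ n - h x * Δt n) *
          (inner ℝ (gradient h x) (ς x) : ℝ) := by
  have hh : Measurable h := hh1.continuous.measurable
  obtain ⟨-, hpos⟩ := integrable_bayesH_and_pos (ΔZ := ΔZ) hh hΔt hρint hρpos n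
  set ρ := bayesH h ρ₀ ΔZ Δt n
  set ρ' := bayesH h ρ₀ ΔZ Δt (n + 1)
  have hψρ : ∀ x, ψ x * ρ x = ρ' x := fun x ↦ by
    rw [hψ]; exact div_mul_cancel₀ _ (hpos x).ne'
  have hgradψ : ∀ x, gradient ψ x = (ψ x * (ΔZ n - Δt n * h x)) • gradient h x := by
    subst hψ
    exact gradient_bayesH_succ_div (hh1.differentiable one_ne_zero) fun x ↦ (hpos x).ne'
  have hmass : ∫ x, ψ x * ρ x = 1 := by
    simp only [hψρ]; exact integral_bayesH_succ hh hΔt hρint hρpos n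
  have hflux : ∀ x, (inner ℝ (gradient ψ x) (ς x) : ℝ) * ρ x =
      ρ' x * (ΔZ n - h x * Δt n) * (inner ℝ (gradient h x) (ς x) : ℝ) := fun x ↦ by
    rw [hgradψ, real_inner_smul_left, ← hψρ]; ring
  calc ∫ x, ρ' x * g x = ∫ x, g x * ψ x * ρ x := by
        congr 1 with x; rw [mul_assoc, hψρ, mul_comm]
    _ = (∫ x, g x * ρ x) * (∫ x, ψ x * ρ x) +
          ∫ x, (inner ℝ (gradient ψ x) (ς x) : ℝ) * ρ x := by
        rw [hweak]; ring
    _ = _ := by simp_rw [hmass, hflux, mul_one, mul_comm (g _)]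

/-- **Integral transfer identity.**  Let `h` be bounded, `C¹` with bounded gradient.
Suppose `g` is integrable against both `ρ_n` and `ρ_{n+1}`, and `ς` is a vector field,
square-integrable against `ρ_n`, satisfying the weak-form identity
`∫ ∇ψ·ς ρ_n = ∫ g ψ ρ_n - (∫ g ρ_n)(∫ ψ ρ_n)` for the particular test function
`ψ = ρ_{n+1}/ρ_n`.  Then
`∫ ρ_{n+1} g = ∫ ρ_n g + ∫ ρ_{n+1} (ΔZ_{n+1} - h Δt_{n+1}) ∇h·ς`. -/
theorem bayes_integral_transfer
    {d : ℕ} (h ρ₀ : EuclideanSpace ℝ (Fin d) → ℝ) (ΔZ Δt : ℕ → ℝ)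
    (hΔt : ∀ n, 0 < Δt n)
    (hh1 : ContDiff ℝ 1 h) (C : ℝ) (hhb : ∀ x, |h x| ≤ C)
    (Cg : ℝ) (hgradb : ∀ x, ‖gradient h x‖ ≤ Cg)
    (hρpos : ∀ x, 0 < ρ₀ x) (hρm : Measurable ρ₀)
    (hρint : Integrable ρ₀) (hρ1 : ∫ x, ρ₀ x = 1)
    (n : ℕ)
    (g : EuclideanSpace ℝ (Fin d) → ℝ) (hgm : Measurable g)
    (hgInt  : Integrable (fun x => g x * bayesH h ρ₀ ΔZ Δt n x))
    (hgInt' : Integrable (fun x => g x * bayesH h ρ₀ ΔZ Δt (n + 1) x))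
    (ς : EuclideanSpace ℝ (Fin d) → EuclideanSpace ℝ (Fin d))
    (hςL2 : Integrable (fun x => ‖ς x‖ ^ 2 * bayesH h ρ₀ ΔZ Δt n x))
    (ψ : EuclideanSpace ℝ (Fin d) → ℝ)
    (hψ : ψ = fun x => bayesH h ρ₀ ΔZ Δt (n + 1) x / bayesH h ρ₀ ΔZ Δt n x)
    (hweak : ∫ x, (inner ℝ (gradient ψ x) (ς x) : ℝ) * bayesH h ρ₀ ΔZ Δt n x =
      (∫ x, g x * ψ x * bayesH h ρ₀ ΔZ Δt n x) -
        (∫ x, g x * bayesH h ρ₀ ΔZ Δt n x) * ∫ x, ψ x * bayesH h ρ₀ ΔZ Δt n x) :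
    ∫ x, bayesH h ρ₀ ΔZ Δt (n + 1) x * g x =
      (∫ x, bayesH h ρ₀ ΔZ Δt n x * g x) +
        ∫ x, bayesH h ρ₀ ΔZ Δt (n + 1) x * (ΔZ n - h x * Δt n) *
          (inner ℝ (gradient h x) (ς x) : ℝ) :=
  bayes_integral_transfer_general h ρ₀ ΔZ Δt hΔt hh1 hρpos hρint n g ς ψ hψ hweak
end
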